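/- Let p ∈ L. For every pair (f,g) ∈ L × L there exist: a pair (a_U, b_U) ∈ ℂ[z,u] × ℂ[z,u]; a pair (f_V, g_V) ∈ L × L such that zʲ·f_V + p·g_V and z⁻ʲ·g_V are both V-holomorphic; and an element c ∈ L supported on monomials uʳzˢ with 0 ≤ r ≤ ⌊(j−2)/k⌋ and kr−j+1 ≤ s ≤ −1, such that (f,g) = (a_U, b_U) + (f_V, g_V) + (c, 0). (This is the statement that every Čech 1-cocycle of E with respect to the cover {U,V} of Z_k admits a canonical representative of the form (Σ a_{rs} zˢuʳ, 0) with indices in the stated range.) -/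

import Mathlib

noncomputable section

/-- `L = ℂ[z,z⁻¹][u]`: Laurent polynomials in `z` with polynomial coefficients in `u`,
realised as the algebra of finitely supported ℂ-linear combinations of monomials on the
exponent monoid `ℤ × ℕ`, where `(s, r)` is the exponent of the monomial `zˢuʳ`. -/
abbrev L : Type := AddMonoidAlgebra ℂ (ℤ × ℕ)

/-- The monomial `zˢ` (`s ∈ ℤ`). -/
def zp (s : ℤ) : L := AddMonoidAlgebra.single (s, 0) 1

/-- The monomial `u`. -/
def uu : L := AddMonoidAlgebra.single (0, 1) 1

/-- `f` is V-holomorphic: every monomial `zˢuʳ` occurring in `f` satisfies `s ≤ k·r`,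
i.e. `f` is holomorphic in the coordinates `(z⁻¹, zᵏu)` of the chart `V` of `Z_k`. -/
def VHol (k : ℕ) (f : L) : Prop := ∀ (s : ℤ) (r : ℕ), f.coeff (s, r) ≠ 0 → s ≤ (k : ℤ) * r

/-- `f` lies in `ℂ[z,u] ⊆ L`, i.e. is holomorphic on the chart `U`. -/
def MemPolyRing (f : L) : Prop := ∀ (s : ℤ) (r : ℕ), f.coeff (s, r) ≠ 0 → 0 ≤ s

/-! Split `g` into its part with nonnegative `z`-exponents (a section over `U`) and the rest
`g_V`; `z⁻ʲ g_V` only has negative `z`-exponents, hence is V-holomorphic. Moving `p g_V` over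
to the first component, `F = f + z⁻ʲ p g_V` is split by exponents `(s, r)` into the part with
`s ≥ 0` (over `U`), the part with `s < 0` and `s + j ≤ kr` (which `zʲ` makes V-holomorphic), and
the remaining monomials, which are exactly those in the canonical range. -/

namespace AddMonoidAlgebra

variable {R M : Type*} [Semiring R] (P : M → Prop) [DecidablePred P]

def filter (x : AddMonoidAlgebra R M) : AddMonoidAlgebra R M := ofCoeff (x.coeff.filter P)

theorem coeff_filter_ne_zero_iff {x : AddMonoidAlgebra R M} {m : M} :
    (x.filter P).coeff m ≠ 0 ↔ P m ∧ x.coeff m ≠ 0 := by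
  rw [filter, coeff_ofCoeff, Finsupp.filter_apply]
  split_ifs with hm <;> simp [hm]

theorem filter_add_filter_not (x : AddMonoidAlgebra R M) :
    x.filter P + x.filter (fun m => ¬ P m) = x := by
  rw [filter, filter, ← ofCoeff_add, Finsupp.filter_add_filter_not, ofCoeff_coeff]

end AddMonoidAlgebra

open AddMonoidAlgebra

theorem coeff_zp_mul (a : ℤ) (f : L) (s : ℤ) (r : ℕ) :
    (zp a * f).coeff (s, r) = f.coeff (s - a, r) := by
  rw [zp, coeff_single_mul_eq_mul_coeff (s - a, r) ?_, one_mul]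
  rintro ⟨b, c⟩ -
  simp only [Prod.mk_add_mk, Prod.mk.injEq, zero_add]
  omega

theorem zp_mul_zp (a b : ℤ) : zp a * zp b = zp (a + b) := by
  simp [zp, single_mul_single]

theorem zp_zero : zp 0 = 1 := rfl

theorem memPolyRing_filter_nonneg (f : L) :
    MemPolyRing (f.filter fun x : ℤ × ℕ => 0 ≤ x.1) :=
  fun _ _ hs => ((coeff_filter_ne_zero_iff _).1 hs).1

theorem vHol_zp_mul {k : ℕ} {a : ℤ} {f : L}
    (hf : ∀ (s : ℤ) (r : ℕ), f.coeff (s, r) ≠ 0 → s + a ≤ (k : ℤ) * r) : VHol k (zp a * f) := by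
  intro s r hs
  rw [coeff_zp_mul] at hs
  linarith [hf _ _ hs]

theorem exponent_bounds_of_not_le {k j : ℕ} (hk : 1 ≤ k) {s : ℤ} {r : ℕ} (hs : s < 0)
    (hsr : ¬ s + j ≤ (k : ℤ) * r) :
    (r : ℤ) ≤ ((j : ℤ) - 2) / k ∧ (k : ℤ) * r - j + 1 ≤ s ∧ s ≤ -1 := by
  refine ⟨?_, by omega, by omega⟩
  rw [Int.le_ediv_iff_mul_le (by exact_mod_cast hk)]
  linarith

/-- Every Čech 1-cocycle `(f,g) ∈ L²` of the bundle `E` determined by `(j,p)`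
on `Z_k`, with respect to the cover `{U, V}`, splits as a sum of a section over `U` (a pair of
polynomials), a section over `V` (a pair whose `T`-transform is V-holomorphic), and a canonical
representative `(c, 0)` with `c` supported on monomials `uʳzˢ` with `0 ≤ r ≤ ⌊(j−2)/k⌋` and
`kr−j+1 ≤ s ≤ −1`. -/
theorem cocycle_canonical_representative (k : ℕ) (hk : 1 ≤ k) (j : ℕ) (p : L) :
    ∀ f g : L,
      ∃ aU bU fV gV c : L,
        MemPolyRing aU ∧ MemPolyRing bU ∧
        VHol k (zp (j : ℤ) * fV + p * gV) ∧ VHol k (zp (-(j : ℤ)) * gV) ∧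
        (∀ (s : ℤ) (r : ℕ), c.coeff (s, r) ≠ 0 →
          (r : ℤ) ≤ ((j : ℤ) - 2) / k ∧ (k : ℤ) * r - j + 1 ≤ s ∧ s ≤ -1) ∧
        f = aU + fV + c ∧ g = bU + gV := by
  classical
  intro f g
  let U : ℤ × ℕ → Prop := fun x => 0 ≤ x.1
  let W : ℤ × ℕ → Prop := fun x => x.1 + j ≤ (k : ℤ) * x.2
  set gV := g.filter fun x => ¬ U x
  set F := f + zp (-j) * (p * gV)
  set h := (F.filter fun x => ¬ U x).filter W
  set c := (F.filter fun x => ¬ U x).filter fun x => ¬ W x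
  have hsplit : F = F.filter U + h + c := by
    rw [add_assoc, filter_add_filter_not, filter_add_filter_not]
  refine ⟨F.filter U, g.filter U, h - zp (-j) * (p * gV), gV, c, memPolyRing_filter_nonneg F,
    memPolyRing_filter_nonneg g, ?_, ?_, ?_, by linear_combination hsplit,
    (filter_add_filter_not _ _).symm⟩
  · have hcancel : zp j * (h - zp (-j) * (p * gV)) + p * gV = zp j * h := by
      rw [mul_sub, ← mul_assoc, zp_mul_zp, add_neg_cancel, zp_zero]
      ring
    rw [hcancel]
    exact vHol_zp_mul fun s r hs => ((coeff_filter_ne_zero_iff _).1 hs).1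
  · refine vHol_zp_mul fun s r hs => ?_
    have hneg : ¬ 0 ≤ s := ((coeff_filter_ne_zero_iff _).1 hs).1
    have hkr : (0 : ℤ) ≤ k * r := by positivity
    omega
  · intro s r hs
    obtain ⟨hW, hs'⟩ := (coeff_filter_ne_zero_iff _).1 hs
    have hneg : ¬ 0 ≤ s := ((coeff_filter_ne_zero_iff _).1 hs').1
    exact exponent_bounds_of_not_le hk (not_le.1 hneg) hW
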